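/- arXiv:1111.6087 — 4 statements merged into one kernel-verified Lean document; each statement's English description precedes it below -/
import Mathlib

section
/- With A_i(r) = { j : dist(i,j) ≤ r and a(j) ≤ r − dist(i,j) }, if A_i(r) ≠ V then A_i(r+1) ⊋ A_i(r) or A_i(r+2) ⊋ A_i(r+1). Equivalently, if A_i(r+2) = A_i(r) then A_i(r) = V. -/
/-- Eccentricity of a vertex: maximum distance to any vertex. -/
noncomputable def ecc {V : Type*} [Fintype V] (G : SimpleGraph V) (v : V) : ℕ :=
  Finset.univ.sup (G.dist v)

/-- Diameter of a graph: maximum eccentricity. -/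
noncomputable def diam {V : Type*} [Fintype V] (G : SimpleGraph V) : ℕ :=
  Finset.univ.sup (ecc G)

/-- Radius of a graph: minimum eccentricity. -/
noncomputable def rad {V : Type*} [Fintype V] (G : SimpleGraph V) : ℕ :=
  sInf (Set.range (ecc G))

/-- Area of visibility of node `i` after round `r`: vertices whose BFS message
(sent upon activation round `a j`, traveling one hop per round) reached `i` by round `r`. -/
def act {V : Type*} [Fintype V] (G : SimpleGraph V) (a : V → ℕ) (i : V) (r : ℕ) : Set V :=
  {j | G.dist i j ≤ r ∧ a j ≤ r - G.dist i j}
/-- If the (nonempty) area of visibility does not grow during two consecutive rounds,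
then it already covers the whole graph. -/
theorem act_stable_univ {V : Type*} [Fintype V] (G : SimpleGraph V) (hG : G.Connected)
    (a : V → ℕ) (ha : ∀ u v : V, G.Adj u v → a v ≤ a u + 1) (i : V) (r : ℕ)
    (hne : (act G a i r).Nonempty)
    (hstable : act G a i (r + 2) = act G a i r) :
    act G a i r = Set.univ := by
  by_contra hcon
  obtain ⟨j, hj⟩ : ∃ j, j ∉ act G a i r := by
    by_contra h
    push_neg at h
    exact hcon (Set.eq_univ_of_forall h)
  obtain ⟨u0, hu0⟩ := hne
  -- find a boundary edge along a walk from u0 to j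
  have key : ∀ {x y : V}, G.Walk x y → x ∈ act G a i r → y ∉ act G a i r →
      ∃ u v, G.Adj u v ∧ u ∈ act G a i r ∧ v ∉ act G a i r := by
    intro x y w
    induction w with
    | nil => intro hx hy; exact absurd hx hy
    | @cons x b y h p ih =>
      intro hx hy
      by_cases hb : b ∈ act G a i r
      · exact ih hb hy
      · exact ⟨x, b, h, hx, hb⟩
  obtain ⟨u, v, huv, hu, hv⟩ := key ((hG u0 j).some) hu0 hj
  obtain ⟨hd, haa⟩ := hu
  have hdv : G.dist i v ≤ G.dist i u + 1 := by
    calc G.dist i v ≤ G.dist i u + G.dist u v := hG.dist_triangle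
    _ ≤ G.dist i u + 1 := by
        have := G.dist_le huv.toWalk
        simp at this
        omega
  have hav : a v ≤ a u + 1 := ha u v huv
  have hv2 : v ∈ act G a i (r + 2) := by
    constructor
    · omega
    · have hduv : G.dist i u ≤ r := hd
      have : a u ≤ r - G.dist i u := haa
      omega
  rw [hstable] at hv2
  exact hv hv2
end

section
/- With A_i(r) as above and assuming some vertex has activation round 0, if A_i does not increase at rounds r+1 and r+2 (i.e., A_i(r+2) = A_i(r)), then max{ dist(i,j) : j ∈ A_i(r) } = ecc(i). -/
lemma mem_act_iff {V : Type*} [Fintype V] (G : SimpleGraph V) (a : V → ℕ) (i j : V) (r : ℕ) :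
    j ∈ act G a i r ↔ a j + G.dist i j ≤ r := by
  constructor
  · rintro ⟨h1, h2⟩; omega
  · intro h; exact ⟨by omega, by omega⟩

/-- discrete intermediate value along a walk for a 2-Lipschitz-ish function -/
lemma walk_iv {V : Type*} (G : SimpleGraph V) (f : V → ℕ)
    (hstep : ∀ u v : V, G.Adj u v → f v ≤ f u + 2) {u j : V} (p : G.Walk u j) (r : ℕ)
    (hu : f u ≤ r) (hj : r + 3 ≤ f j) : ∃ x : V, r + 1 ≤ f x ∧ f x ≤ r + 2 := by
  induction p with
  | nil => omega
  | @cons u v j h q ih =>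
    by_cases hv : f v ≤ r
    · exact ih hv hj
    · exact ⟨v, by omega, le_trans (hstep u v h) (by omega)⟩

/-- Eccentricity convergence: two consecutive rounds with no new BFS arrival imply the
local eccentricity estimate is correct. -/
theorem ecc_convergence {V : Type*} [Fintype V] (G : SimpleGraph V) (hG : G.Connected)
    (a : V → ℕ) (ha : ∀ u v : V, G.Adj u v → a v ≤ a u + 1)
    (h0 : ∃ w : V, a w = 0) (i : V) (r : ℕ)
    (hne : (act G a i r).Nonempty)
    (hstable : act G a i (r + 2) = act G a i r) :
    sSup (G.dist i '' act G a i r) = ecc G i := by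
  set f : V → ℕ := fun j => a j + G.dist i j with hf
  have hstep : ∀ u v : V, G.Adj u v → f v ≤ f u + 2 := by
    intro u v huv
    have h1 : a v ≤ a u + 1 := ha u v huv
    have h2 : G.dist i v ≤ G.dist i u + G.dist u v := hG.dist_triangle
    have h3 : G.dist u v = 1 := (SimpleGraph.dist_eq_one_iff_adj).mpr huv
    simp only [hf]
    omega
  -- act r = univ
  have huniv : act G a i r = Set.univ := by
    obtain ⟨u, hu⟩ := hne
    ext j
    simp only [Set.mem_univ, iff_true]
    rw [mem_act_iff]
    by_contra hj
    have hfu : f u ≤ r := (mem_act_iff G a i u r).mp hu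
    have hfj : r + 3 ≤ f j := by
      have : ¬ a j + G.dist i j ≤ r + 2 := by
        intro hc
        exact hj ((mem_act_iff G a i j r).mp (hstable ▸ (mem_act_iff G a i j (r+2)).mpr hc))
      simp only [hf]; omega
    obtain ⟨x, hx1, hx2⟩ := walk_iv G f hstep ((hG u j).some) r hfu hfj
    have hxr : x ∈ act G a i r := hstable ▸ (mem_act_iff G a i x (r+2)).mpr hx2
    have hfx := (mem_act_iff G a i x r).mp hxr
    have hfx' : f x = a x + G.dist i x := rfl
    omega
  rw [huniv, Set.image_univ]
  have hbdd : BddAbove (Set.range (G.dist i)) := (Set.finite_range _).bddAbove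
  have : Nonempty V := ⟨i⟩
  apply le_antisymm
  · apply csSup_le (Set.range_nonempty _)
    rintro _ ⟨j, rfl⟩
    exact Finset.le_sup (Finset.mem_univ j)
  · apply Finset.sup_le
    intro j _
    exact le_csSup hbdd ⟨j, rfl⟩
end

section
/- In the synchronous BFS-flooding model where each vertex rebroadcasts the BFS message of origin i exactly once (upon first receipt), a vertex j can receive a BFS message originated at vertex i (activated at round r) only in rounds r + dist(i,j), r + dist(i,j) + 1, or r + dist(i,j) + 2. -/
/-- Sliding-window property: in synchronous BFS flooding where every node rebroadcasts
the message of origin i exactly once, one round after first receipt (f j is the first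
receipt round of j, with f i = r the activation round of the origin), a vertex j can
receive a copy (from a neighbor u, at round f u + 1) only at rounds r + dist(i,j),
r + dist(i,j) + 1 or r + dist(i,j) + 2. -/
theorem bfs_sliding_window {V : Type*} [Fintype V] (G : SimpleGraph V) (hG : G.Connected)
    (i : V) (r : ℕ) (f : V → ℕ)
    (hfi : f i = r)
    (hf : ∀ j : V, j ≠ i → f j = sInf {t : ℕ | ∃ u : V, G.Adj u j ∧ t = f u + 1}) :
    ∀ j u : V, G.Adj u j →
      r + G.dist i j ≤ f u + 1 ∧ f u + 1 ≤ r + G.dist i j + 2 := by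
  have hub : ∀ j, f j ≤ r + G.dist i j := by
    suffices h : ∀ n j, G.dist i j = n → f j ≤ r + n from fun j => h _ j rfl
    intro n
    induction n using Nat.strong_induction_on with
    | _ n ih =>
      intro j hn
      rcases eq_or_ne j i with rfl | hji
      · simp [hfi]
      · obtain ⟨p, hp⟩ := (hG i j).exists_walk_length_eq_dist
        have hpos : 0 < p.length := by
          rcases p with _ | _
          · exact absurd rfl hji.symm
          · simp
        cases hq : p.reverse with
        | nil =>
          have := congrArg SimpleGraph.Walk.length hq
          simp at this
          omega
        | @cons _ u _ hadj q =>
          have hlen : q.length + 1 = n := by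
            have := congrArg SimpleGraph.Walk.length hq
            simp at this
            omega
          have hdu : G.dist i u ≤ q.length := by
            have := G.dist_le q.reverse
            simpa using this
          have hfu : f u ≤ r + G.dist i u :=
            ih (G.dist i u) (by omega) u rfl
          have hle : f j ≤ f u + 1 := by
            rw [hf j hji]
            exact Nat.sInf_le ⟨u, hadj.symm, rfl⟩
          omega
  have hlb : ∀ j, r + G.dist i j ≤ f j := by
    suffices h : ∀ n j, f j = n → r + G.dist i j ≤ n from fun j => h _ j rfl
    intro n
    induction n using Nat.strong_induction_on with
    | _ n ih =>
      intro j hn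
      rcases eq_or_ne j i with rfl | hji
      · simp [hfi] at hn; simp [hn]
      · have hne : {t : ℕ | ∃ u : V, G.Adj u j ∧ t = f u + 1}.Nonempty := by
          obtain ⟨p, hp⟩ := (hG j i).exists_walk_length_eq_dist
          cases p with
          | nil => exact absurd rfl hji
          | cons hadj q => exact ⟨_, _, hadj.symm, rfl⟩
        have hmem := Nat.sInf_mem hne
        rw [← hf j hji, hn] at hmem
        obtain ⟨u, hadj, hu⟩ := hmem
        have h1 : G.dist u j = 1 := SimpleGraph.dist_eq_one_iff_adj.mpr hadj
        have htri := hG.dist_triangle (u := i) (v := u) (w := j)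
        have := ih (f u) (by omega) u rfl
        omega
  have key : ∀ j, f j = r + G.dist i j := fun j => le_antisymm (hub j) (hlb j)
  intro j u hadj
  have h1 : G.dist u j = 1 := SimpleGraph.dist_eq_one_iff_adj.mpr hadj
  have h2 : G.dist j u = 1 := SimpleGraph.dist_eq_one_iff_adj.mpr hadj.symm
  have t1 := hG.dist_triangle (u := i) (v := u) (w := j)
  have t2 := hG.dist_triangle (u := i) (v := j) (w := u)
  have := key u
  omega
end

section
/- Let G be connected with |V| ≥ 2, let a : V → ℕ satisfy a(v) ≤ a(u)+1 for adjacent u,v and min a = 0, and let A_i(r) = { j : dist(i,j) ≤ r and a(j) ≤ r − dist(i,j) }. If u, v are adjacent, u ∈ A_i(r), and v ∉ A_i(r), then dist(i,v) ∈ {dist(i,u), dist(i,u)+1} and v ∈ A_i(r+2). -/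
/-- Frontier step of the visibility-area lemma: an outside neighbor of an inside vertex
is at distance dist(i,u) or dist(i,u)+1 from i, and joins the area within two rounds. -/
theorem act_frontier {V : Type*} [Fintype V] (G : SimpleGraph V) (hG : G.Connected)
    (hcard : 2 ≤ Fintype.card V)
    (a : V → ℕ) (ha : ∀ u v : V, G.Adj u v → a v ≤ a u + 1)
    (h0 : ∃ w : V, a w = 0)
    (i : V) (r : ℕ) (u v : V) (huv : G.Adj u v)
    (hu : u ∈ act G a i r) (hv : v ∉ act G a i r) :
    (G.dist i v = G.dist i u ∨ G.dist i v = G.dist i u + 1) ∧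
    v ∈ act G a i (r + 2) := by
  obtain ⟨hd, haa⟩ := hu
  have h1 : G.dist u v = 1 := SimpleGraph.dist_eq_one_iff_adj.mpr huv
  have h2 : G.dist v u = 1 := SimpleGraph.dist_eq_one_iff_adj.mpr huv.symm
  have t1 : G.dist i v ≤ G.dist i u + 1 := by
    have := hG.dist_triangle (u := i) (v := u) (w := v); omega
  have t2 : G.dist i u ≤ G.dist i v + 1 := by
    have := hG.dist_triangle (u := i) (v := v) (w := u); omega
  have hav : a v ≤ a u + 1 := ha u v huv
  have hzv : G.dist i u = 0 → G.dist i v = 1 := by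
    intro h
    have hi : i = u := (hG.dist_eq_zero_iff).mp h
    rw [hi]; exact h1
  have hnot : ¬ G.dist i v = G.dist i u - 1 ∨ G.dist i u = 0 := by
    by_cases hz : G.dist i u = 0
    · exact Or.inr hz
    · left
      intro he
      exact hv ⟨by omega, by omega⟩
  constructor
  · rcases hnot with h | h
    · omega
    · have hdv := hzv h
      omega
  · exact ⟨by omega, by omega⟩
end
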